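/- Let G be a topological group. Suppose there exists ε ∈ (0,1) such that for every finite subset E ⊆ G and every right-invariant continuous pseudo-metric d on G there is a finitely supported a : G → ℝ with a ≥ 0, ∑ a = 1, and |∑_x a(x)f(x) − ∑_x a(g⁻¹x)f(x)| ≤ ε for all g ∈ E and all 1-Lipschitz f : (G,d) → [0,1]. Then the same conclusion holds for every ε' > 0 in place of ε, and consequently G is amenable. -/

import Mathlib

/-- Bounded right-uniformly continuous real functions on a topological group. -/
def RUCb (G : Type*) [Group G] [TopologicalSpace G] : Set (G → ℝ) :=
  {f | (∃ C, ∀ x, |f x| ≤ C) ∧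
    ∀ ε > (0:ℝ), ∃ U ∈ nhds (1 : G), ∀ x y : G, x * y⁻¹ ∈ U → |f x - f y| ≤ ε}

/-- A mean on a set `D` of real functions on `X`: positive, normalized, linear on `D`. -/
def IsMeanOn (X : Type*) (D : Set (X → ℝ)) (m : (X → ℝ) → ℝ) : Prop :=
  m (fun _ => 1) = 1 ∧
  (∀ f ∈ D, ∀ g ∈ D, m (f + g) = m f + m g) ∧
  (∀ (c : ℝ), ∀ f ∈ D, m (c • f) = c * m f) ∧
  (∀ f ∈ D, (∀ x, 0 ≤ f x) → 0 ≤ m f)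

/-- A topological group is amenable if `RUC_b(G)` admits a left-invariant mean. -/
def TopAmenable (G : Type*) [Group G] [TopologicalSpace G] : Prop :=
  ∃ m : (G → ℝ) → ℝ, IsMeanOn G (RUCb G) m ∧
    ∀ f ∈ RUCb G, ∀ g : G, m (fun x => f (g * x)) = m f

/-- A pseudo-metric. -/
structure IsPseudoMetric {G : Type*} (d : G → G → ℝ) : Prop where
  refl : ∀ x, d x x = 0
  symm : ∀ x y, d x y = d y x
  triangle : ∀ x y z, d x z ≤ d x y + d y z

/-!
Write `⟨a, f⟩ = ∑ₓ a(x) f(x)`. If `b` is `ε`-almost invariant for `(E, ε⁻¹ d)` and `b'` is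
`ε`-almost invariant for `(S⁻¹ S, ∑_{y ∈ S} d(y ·, y ·))`, where `S = ({1} ∪ E) · supp b`, then for
every test function `f` the function `F y = ⟨b', f(y ·)⟩` is `d`-Lipschitz and oscillates by at
most `ε` on `S`. Clamping `(F - min_S F) / ε` to `[0, 1]` gives a test function `Φ` for
`(E, ε⁻¹ d)` with `F = ε Φ + κ` on `S`, so the convolution `b * b'` is `ε²`-almost invariant for
`(E, d)`; iterating reaches every `ε' > 0`.

A bounded right-uniformly continuous `f` is `1`-Lipschitz for the continuous right-invariant
pseudo-metric `sup_g |f(x g) - f(y g)|`, so after an affine rescaling almost invariant means exist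
for any finitely many such `f` and `g ∈ G`. A limit of them along an ultrafilter on the directed
set of such finite data is a left-invariant mean on `RUC_b(G)`.
-/

open Finsupp Filter Topology Set
open scoped Pointwise

section WeightedSum

variable {X Y : Type*}

def weightedSum (a : X →₀ ℝ) (f : X → ℝ) : ℝ := a.sum fun x c => c * f x

structure IsProb (a : X →₀ ℝ) : Prop where
  nonneg : ∀ x, 0 ≤ a x
  sum_eq_one : a.sum (fun _ c => c) = 1

lemma weightedSum_eq_linearCombination (a : X →₀ ℝ) (f : X → ℝ) :
    weightedSum a f = linearCombination ℝ f a := rfl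

lemma weightedSum_add (a : X →₀ ℝ) (f f' : X → ℝ) :
    weightedSum a (f + f') = weightedSum a f + weightedSum a f' := by
  simp only [weightedSum, Pi.add_apply, mul_add, Finsupp.sum_add]

lemma weightedSum_sub (a : X →₀ ℝ) (f f' : X → ℝ) :
    weightedSum a (fun x => f x - f' x) = weightedSum a f - weightedSum a f' := by
  simp only [weightedSum, mul_sub, Finsupp.sum_sub]

lemma weightedSum_smul (a : X →₀ ℝ) (c : ℝ) (f : X → ℝ) :
    weightedSum a (c • f) = c * weightedSum a f := by
  simp only [weightedSum, Pi.smul_apply, smul_eq_mul, Finsupp.mul_sum, mul_left_comm]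

lemma weightedSum_mapDomain (φ : X → Y) (a : X →₀ ℝ) (f : Y → ℝ) :
    weightedSum (mapDomain φ a) f = weightedSum a (f ∘ φ) :=
  linearCombination_mapDomain (R := ℝ) φ a

lemma weightedSum_nonneg {a : X →₀ ℝ} (ha : ∀ x, 0 ≤ a x) {f : X → ℝ} (hf : ∀ x, 0 ≤ f x) :
    0 ≤ weightedSum a f :=
  Finset.sum_nonneg fun x _ => mul_nonneg (ha x) (hf x)

namespace IsProb

variable {a : X →₀ ℝ}

lemma weightedSum_const (ha : IsProb a) (c : ℝ) : weightedSum a (fun _ => c) = c := by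
  rw [weightedSum, ← Finsupp.sum_mul, ha.sum_eq_one, one_mul]

lemma weightedSum_eq_affine (ha : IsProb a) {F Φ : X → ℝ} {p q : ℝ}
    (h : ∀ x ∈ a.support, F x = p * Φ x + q) : weightedSum a F = p * weightedSum a Φ + q := by
  calc weightedSum a F = weightedSum a (p • Φ + fun _ => q) := Finsupp.sum_congr fun x hx => by
        rw [h x hx, Pi.add_apply, Pi.smul_apply, smul_eq_mul]
    _ = p * weightedSum a Φ + q := by
        rw [weightedSum_add, weightedSum_smul, ha.weightedSum_const]

lemma abs_weightedSum_le (ha : IsProb a) {f : X → ℝ} {M : ℝ} (hf : ∀ x, |f x| ≤ M) :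
    |weightedSum a f| ≤ M := by
  calc |weightedSum a f| ≤ a.sum fun x c => |c * f x| := Finset.abs_sum_le_sum_abs _ _
    _ ≤ weightedSum a fun _ => M := Finset.sum_le_sum fun x _ => by
        dsimp only
        rw [abs_mul, abs_of_nonneg (ha.nonneg x)]
        exact mul_le_mul_of_nonneg_left (hf x) (ha.nonneg x)
    _ = M := ha.weightedSum_const M

lemma mapDomain (ha : IsProb a) (φ : X → Y) : IsProb (mapDomain φ a) where
  nonneg := mapDomain_nonneg (g := a) ha.nonneg
  sum_eq_one := (sum_mapDomain_index (fun _ => rfl) fun _ _ _ => rfl).trans ha.sum_eq_one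

lemma support_nonempty (ha : IsProb a) : a.support.Nonempty := by
  refine support_nonempty_iff.2 fun h0 => ?_
  simpa [h0] using ha.sum_eq_one

end IsProb

end WeightedSum

section Convolution

variable {G : Type*} [Group G]

noncomputable def convolution (b b' : G →₀ ℝ) : G →₀ ℝ := b.sum fun y c => c • mapDomain (y * ·) b'

lemma weightedSum_convolution (b b' : G →₀ ℝ) (f : G → ℝ) :
    weightedSum (convolution b b') f =
      weightedSum b fun y => weightedSum b' fun x => f (y * x) := by
  simp only [convolution, weightedSum_eq_linearCombination, map_finsuppSum, map_smul,
    linearCombination_mapDomain, smul_eq_mul]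
  rfl

lemma IsProb.convolution {b b' : G →₀ ℝ} (hb : IsProb b) (hb' : IsProb b') :
    IsProb (convolution b b') where
  nonneg x := by
    rw [_root_.convolution, Finsupp.sum_apply]
    exact Finset.sum_nonneg fun y _ =>
      mul_nonneg (hb.nonneg y) (mapDomain_nonneg (g := b') hb'.nonneg x)
  sum_eq_one := by
    have h := weightedSum_convolution b b' fun _ => 1
    simp only [hb'.weightedSum_const, hb.weightedSum_const] at h
    simpa [weightedSum] using h

end Convolution

section PseudoMetric

variable {X : Type*} {d : X → X → ℝ}

lemma IsPseudoMetric.nonneg (hd : IsPseudoMetric d) (x y : X) : 0 ≤ d x y := by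
  linarith [hd.triangle x y x, hd.symm x y, hd.refl x]

lemma IsPseudoMetric.continuous_of_eventually_lt [TopologicalSpace X] (hd : IsPseudoMetric d)
    (h : ∀ y, ∀ δ > 0, ∀ᶠ z in 𝓝 y, d y z < δ) (x : X) : Continuous (d x) := by
  refine continuous_iff_continuousAt.2 fun y =>
    Metric.tendsto_nhds.2 fun δ hδ => (h y δ hδ).mono fun z hz => ?_
  rw [Real.dist_eq, abs_sub_lt_iff]
  constructor
  · linarith [hd.triangle x y z]
  · linarith [hd.triangle x z y, hd.symm z y]

end PseudoMetric

structure IsRightInvContPseudoMetric {G : Type*} [Group G] [TopologicalSpace G]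
    (d : G → G → ℝ) : Prop extends IsPseudoMetric d where
  mul_right : ∀ g x y : G, d (x * g) (y * g) = d x y
  continuous : ∀ x, Continuous (d x)

namespace IsRightInvContPseudoMetric

variable {G : Type*} [Group G] [TopologicalSpace G] {d : G → G → ℝ}

lemma isOpen_ball (hd : IsRightInvContPseudoMetric d) (x : G) (r : ℝ) :
    IsOpen {y | d x y < r} :=
  isOpen_lt (hd.continuous x) continuous_const

lemma of_isOpen_ball (hd : IsPseudoMetric d) (hr : ∀ g x y : G, d (x * g) (y * g) = d x y)
    (ho : ∀ x : G, ∀ r > (0 : ℝ), IsOpen {y | d x y < r}) : IsRightInvContPseudoMetric d where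
  toIsPseudoMetric := hd
  mul_right := hr
  continuous := hd.continuous_of_eventually_lt fun y δ hδ =>
    (ho y δ hδ).mem_nhds (by simpa [hd.refl y] using hδ)

lemma const_mul (hd : IsRightInvContPseudoMetric d) {c : ℝ} (hc : 0 ≤ c) :
    IsRightInvContPseudoMetric fun x y => c * d x y where
  refl x := by rw [hd.refl, mul_zero]
  symm x y := by rw [hd.symm]
  triangle x y z := by rw [← mul_add]; exact mul_le_mul_of_nonneg_left (hd.triangle x y z) hc
  mul_right g x y := by rw [hd.mul_right]
  continuous x := continuous_const.mul (hd.continuous x)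

lemma sum {ι : Type*} (s : Finset ι) {d : ι → G → G → ℝ}
    (hd : ∀ i ∈ s, IsRightInvContPseudoMetric (d i)) :
    IsRightInvContPseudoMetric fun x y => ∑ i ∈ s, d i x y where
  refl x := Finset.sum_eq_zero fun i hi => (hd i hi).refl x
  symm x y := Finset.sum_congr rfl fun i hi => (hd i hi).symm x y
  triangle x y z := by
    rw [← Finset.sum_add_distrib]
    exact Finset.sum_le_sum fun i hi => (hd i hi).triangle x y z
  mul_right g x y := Finset.sum_congr rfl fun i hi => (hd i hi).mul_right g x y
  continuous x := continuous_finsetSum s fun i hi => (hd i hi).continuous x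

lemma comp_mul_left [ContinuousMul G] (hd : IsRightInvContPseudoMetric d) (g : G) :
    IsRightInvContPseudoMetric fun x y => d (g * x) (g * y) where
  refl x := hd.refl _
  symm x y := hd.symm _ _
  triangle x y z := hd.triangle _ _ _
  mul_right h x y := by simp only [← mul_assoc, hd.mul_right]
  continuous x := (hd.continuous _).comp (continuous_const_mul g)

end IsRightInvContPseudoMetric

section AlmostInvariant

variable {G : Type*} [Group G]

def AlmostInvariant (ε : ℝ) (E : Finset G) (d : G → G → ℝ) (a : G →₀ ℝ) : Prop :=
  ∀ g ∈ E, ∀ f : G → ℝ, (∀ x y, |f x - f y| ≤ d x y) → (∀ x, f x ∈ Icc (0 : ℝ) 1) →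
    |weightedSum a f - weightedSum (mapDomain (fun x => g * x) a) f| ≤ ε

def HasAlmostInvariantMeans (G : Type*) [Group G] [TopologicalSpace G] (ε : ℝ) : Prop :=
  ∀ (E : Finset G) (d : G → G → ℝ), IsRightInvContPseudoMetric d →
    ∃ a, IsProb a ∧ AlmostInvariant ε E d a

lemma abs_weightedSum_mul_left_sub_le {d : G → G → ℝ}
    (hd : ∀ g x y : G, d (x * g) (y * g) = d x y) {b : G →₀ ℝ} (hb : IsProb b) {f : G → ℝ}
    (hf : ∀ x y, |f x - f y| ≤ d x y) (y y' : G) :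
    |weightedSum b (fun x => f (y * x)) - weightedSum b (fun x => f (y' * x))| ≤ d y y' := by
  rw [← weightedSum_sub]
  exact hb.abs_weightedSum_le fun x => (hf _ _).trans_eq (hd x y y')

lemma AlmostInvariant.abs_weightedSum_mul_left_sub_le [DecidableEq G] {ε : ℝ} {S : Finset G}
    {d : G → G → ℝ} (hd : ∀ x y, 0 ≤ d x y) {b : G →₀ ℝ}
    (hb : AlmostInvariant ε (S⁻¹ * S) (fun u v => ∑ y ∈ S, d (y * u) (y * v)) b)
    {f : G → ℝ} (hf : ∀ x y, |f x - f y| ≤ d x y) (hf01 : ∀ x, f x ∈ Icc (0 : ℝ) 1)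
    {y y' : G} (hy : y ∈ S) (hy' : y' ∈ S) :
    |weightedSum b (fun x => f (y * x)) - weightedSum b (fun x => f (y' * x))| ≤ ε := by
  have hlip (u v : G) : |f (y * u) - f (y * v)| ≤ ∑ w ∈ S, d (w * u) (w * v) :=
    (hf _ _).trans (Finset.single_le_sum (f := fun w => d (w * u) (w * v)) (fun _ _ => hd _ _) hy)
  have := hb (y⁻¹ * y') (Finset.mul_mem_mul (Finset.inv_mem_inv hy) hy') _ hlip fun _ => hf01 _
  simpa [weightedSum_mapDomain, Function.comp_def, ← mul_assoc] using this

lemma exists_projIcc_affine {X : Type*} {d : X → X → ℝ} {F : X → ℝ} {S : Finset X}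
    (hS : S.Nonempty) {ε : ℝ} (hε : 0 < ε) (hF : ∀ x y, |F x - F y| ≤ d x y)
    (hosc : ∀ y ∈ S, ∀ y' ∈ S, |F y - F y'| ≤ ε) :
    ∃ Φ : X → ℝ, (∀ x, Φ x ∈ Icc (0 : ℝ) 1) ∧ (∀ x y, |Φ x - Φ y| ≤ ε⁻¹ * d x y) ∧
      ∃ κ, ∀ y ∈ S, F y = ε * Φ y + κ := by
  obtain ⟨y₀, hy₀, hmin⟩ := S.exists_min_image F hS
  refine ⟨fun x => projIcc 0 1 zero_le_one ((F x - F y₀) / ε), fun x => (projIcc _ _ _ _).2,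
    fun x y => ?_, F y₀, fun y hy => ?_⟩
  · refine (abs_projIcc_sub_projIcc _).trans ?_
    rw [← sub_div, abs_div, abs_of_pos hε, sub_sub_sub_cancel_right, div_eq_inv_mul]
    exact mul_le_mul_of_nonneg_left (hF x y) (inv_nonneg.2 hε.le)
  · have hmem : (F y - F y₀) / ε ∈ Icc (0 : ℝ) 1 := by
      rw [mem_Icc, div_le_one hε, le_div_iff₀ hε, zero_mul, sub_nonneg]
      exact ⟨hmin y hy, (le_abs_self _).trans (hosc y hy y₀ hy₀)⟩
    dsimp only
    rw [projIcc_of_mem _ hmem]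
    field_simp
    ring

lemma almostInvariant_sq_convolution [DecidableEq G] {ε : ℝ} (hε : 0 < ε) {d : G → G → ℝ}
    (hd : IsPseudoMetric d) (hdr : ∀ g x y : G, d (x * g) (y * g) = d x y) {E : Finset G}
    {b b' : G →₀ ℝ}
    (hb : IsProb b) (hbE : AlmostInvariant ε E (fun x y => ε⁻¹ * d x y) b) (hb' : IsProb b')
    (hb'E : AlmostInvariant ε ((insert 1 E * b.support)⁻¹ * (insert 1 E * b.support))
      (fun u v => ∑ y ∈ insert 1 E * b.support, d (y * u) (y * v)) b') :
    AlmostInvariant (ε ^ 2) E d (convolution b b') := by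
  set S := insert 1 E * b.support
  intro g hg f hf hf01
  set F : G → ℝ := fun y => weightedSum b' fun x => f (y * x)
  obtain ⟨Φ, hΦ01, hΦ, κ, hFΦ⟩ := exists_projIcc_affine
    ((Finset.insert_nonempty 1 E).mul hb.support_nonempty) hε
    (abs_weightedSum_mul_left_sub_le hdr hb' hf)
    fun y hy y' hy' => hb'E.abs_weightedSum_mul_left_sub_le hd.nonneg hf hf01 hy hy'
  have hbS (x) (hx : x ∈ b.support) : F x = ε * Φ x + κ :=
    hFΦ x (by simpa using Finset.mul_mem_mul (Finset.mem_insert_self 1 E) hx)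
  have hgbS (x) (hx : x ∈ (mapDomain (fun x => g * x) b).support) : F x = ε * Φ x + κ := by
    obtain ⟨w, hw, rfl⟩ := Finset.mem_image.1 (mapDomain_support hx)
    exact hFΦ _ (Finset.mul_mem_mul (Finset.mem_insert_of_mem hg) hw)
  calc |weightedSum (convolution b b') f - weightedSum (mapDomain (g * ·) (convolution b b')) f|
      = |weightedSum b F - weightedSum (mapDomain (g * ·) b) F| := by
        simp only [weightedSum_convolution, weightedSum_mapDomain, Function.comp_def, F, mul_assoc]
    _ = ε * |weightedSum b Φ - weightedSum (mapDomain (g * ·) b) Φ| := by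
        rw [hb.weightedSum_eq_affine hbS, (hb.mapDomain _).weightedSum_eq_affine hgbS,
          add_sub_add_right_eq_sub, ← mul_sub, abs_mul, abs_of_pos hε]
    _ ≤ ε * ε := mul_le_mul_of_nonneg_left (hbE g hg Φ hΦ hΦ01) hε.le
    _ = ε ^ 2 := (sq ε).symm

end AlmostInvariant

namespace HasAlmostInvariantMeans

variable {G : Type*} [Group G] [TopologicalSpace G] {ε : ℝ}

lemma mono {ε' : ℝ} (h : HasAlmostInvariantMeans G ε) (hε : ε ≤ ε') :
    HasAlmostInvariantMeans G ε' := fun E d hd => by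
  obtain ⟨a, ha, haE⟩ := h E d hd
  exact ⟨a, ha, fun g hg f hf hf01 => (haE g hg f hf hf01).trans hε⟩

lemma sq [ContinuousMul G] (h : HasAlmostInvariantMeans G ε) (hε : 0 < ε) :
    HasAlmostInvariantMeans G (ε ^ 2) := fun E d hd => by
  classical
  obtain ⟨b, hb, hbE⟩ := h E _ (hd.const_mul (inv_nonneg.2 hε.le))
  obtain ⟨b', hb', hb'E⟩ := h _ _ <| .sum (insert 1 E * b.support) fun y _ => hd.comp_mul_left y
  exact ⟨convolution b b', hb.convolution hb',
    almostInvariant_sq_convolution hε hd.toIsPseudoMetric hd.mul_right hb hbE hb' hb'E⟩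

lemma of_lt_one [ContinuousMul G] (h : HasAlmostInvariantMeans G ε) (hε : ε ∈ Ioo (0 : ℝ) 1)
    {ε' : ℝ} (hε' : 0 < ε') : HasAlmostInvariantMeans G ε' := by
  have hpow (k : ℕ) : HasAlmostInvariantMeans G (ε ^ 2 ^ k) := by
    induction k with
    | zero => simpa using h
    | succ k ih => simpa [pow_succ, pow_mul] using ih.sq (pow_pos hε.1 _)
  obtain ⟨n, hn⟩ := exists_pow_lt_of_lt_one hε' hε.2
  exact (hpow n).mono <|
    (pow_le_pow_of_le_one hε.1.le hε.2.le Nat.lt_two_pow_self.le).trans hn.le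

end HasAlmostInvariantMeans

section RightOsc

variable {G : Type*} [Group G] {f : G → ℝ}

noncomputable def rightOsc (f : G → ℝ) (x y : G) : ℝ := ⨆ g, |f (x * g) - f (y * g)|

lemma abs_sub_le_rightOsc (hf : ∃ C, ∀ x, |f x| ≤ C) (x y g : G) :
    |f (x * g) - f (y * g)| ≤ rightOsc f x y := by
  obtain ⟨C, hC⟩ := hf
  refine le_ciSup (f := fun g => |f (x * g) - f (y * g)|) ⟨C + C, ?_⟩ g
  rintro _ ⟨g', rfl⟩
  exact (abs_sub _ _).trans (add_le_add (hC _) (hC _))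

lemma rightOsc_le {x y : G} {M : ℝ} (h : ∀ g, |f (x * g) - f (y * g)| ≤ M) :
    rightOsc f x y ≤ M :=
  ciSup_le h

lemma isPseudoMetric_rightOsc (hf : ∃ C, ∀ x, |f x| ≤ C) : IsPseudoMetric (rightOsc f) where
  refl x := le_antisymm (rightOsc_le fun g => by simp) <|
    (abs_nonneg _).trans (abs_sub_le_rightOsc hf x x 1)
  symm x y := le_antisymm
    (rightOsc_le fun g => abs_sub_comm (f (x * g)) _ ▸ abs_sub_le_rightOsc hf y x g)
    (rightOsc_le fun g => abs_sub_comm (f (y * g)) _ ▸ abs_sub_le_rightOsc hf x y g)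
  triangle x y z := rightOsc_le fun g => (abs_sub_le _ (f (y * g)) _).trans <|
    add_le_add (abs_sub_le_rightOsc hf x y g) (abs_sub_le_rightOsc hf y z g)

lemma rightOsc_mul_right (f : G → ℝ) (g x y : G) : rightOsc f (x * g) (y * g) = rightOsc f x y := by
  simp only [rightOsc, mul_assoc]
  exact (Equiv.mulLeft g).iSup_comp (g := fun h => |f (x * h) - f (y * h)|)

lemma isRightInvContPseudoMetric_rightOsc [TopologicalSpace G] [ContinuousMul G]
    (hf : f ∈ RUCb G) : IsRightInvContPseudoMetric (rightOsc f) where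
  toIsPseudoMetric := isPseudoMetric_rightOsc hf.1
  mul_right := rightOsc_mul_right f
  continuous := (isPseudoMetric_rightOsc hf.1).continuous_of_eventually_lt fun y δ hδ => by
    obtain ⟨U, hU, hfU⟩ := hf.2 (δ / 2) (half_pos hδ)
    have hy : Tendsto (· * y⁻¹) (𝓝 y) (𝓝 1) := by
      simpa using (continuous_mul_const y⁻¹).tendsto y
    filter_upwards [hy hU] with z hz
    refine (rightOsc_le fun g => ?_).trans_lt (half_lt_self hδ)
    rw [abs_sub_comm]
    exact hfU _ _ (by simpa [mul_assoc] using hz)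

end RightOsc

section Amenability

variable {G : Type*} [Group G]

lemma AlmostInvariant.abs_sub_le_of_abs_le {ε : ℝ} {E : Finset G} {d : G → G → ℝ}
    {a : G →₀ ℝ} (ha : IsProb a) (h : AlmostInvariant ε E d a) {f : G → ℝ} {K : ℝ} (hK : 0 < K)
    (hfK : ∀ x, |f x| ≤ K) (hf : ∀ x y, |f x - f y| ≤ 2 * K * d x y) {g : G} (hg : g ∈ E) :
    |weightedSum a f - weightedSum (mapDomain (g * ·) a) f| ≤ 2 * K * ε := by
  have h2K : 0 < 2 * K := by positivity
  set u : G → ℝ := fun x => (f x + K) / (2 * K)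
  have hfu (x) : f x = 2 * K * u x + -K := by
    simp only [u]
    field_simp
    ring
  have hu01 (x) : u x ∈ Icc (0 : ℝ) 1 := by
    rw [mem_Icc, le_div_iff₀ h2K, div_le_one h2K]
    constructor <;> linarith [abs_le.1 (hfK x)]
  have hu (x y) : |u x - u y| ≤ d x y := by
    rw [← sub_div, add_sub_add_right_eq_sub, abs_div, abs_of_pos h2K, div_le_iff₀ h2K, mul_comm]
    exact hf x y
  rw [ha.weightedSum_eq_affine fun x _ => hfu x,
    (ha.mapDomain _).weightedSum_eq_affine fun x _ => hfu x, add_sub_add_right_eq_sub,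
    ← mul_sub, abs_mul, abs_of_pos h2K]
  exact mul_le_mul_of_nonneg_left (h g hg u hu hu01) h2K.le

variable [TopologicalSpace G]

lemma exists_isProb_forall_RUCb [ContinuousMul G]
    (h : ∀ ε > 0, HasAlmostInvariantMeans G ε) (E : Finset G) (F : Finset (RUCb G)) {δ : ℝ}
    (hδ : 0 < δ) : ∃ a, IsProb a ∧ ∀ g ∈ E, ∀ f ∈ F,
      |weightedSum a f - weightedSum (mapDomain (g * ·) a) f| ≤ δ := by
  choose C hC using fun f : RUCb G => f.2.1
  set K := ∑ f ∈ F, |C f| + 1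
  have hK : 1 ≤ K := le_add_of_nonneg_left (Finset.sum_nonneg fun _ _ => abs_nonneg _)
  have hfK (f) (hf : f ∈ F) (x) : |f.1 x| ≤ K :=
    calc |f.1 x| ≤ |C f| := (hC f x).trans (le_abs_self _)
      _ ≤ ∑ f ∈ F, |C f| := Finset.single_le_sum (fun f _ => abs_nonneg (C f)) hf
      _ ≤ K := le_add_of_nonneg_right zero_le_one
  set D : G → G → ℝ := fun x y => ∑ f ∈ F, rightOsc f.1 x y
  have hD : IsRightInvContPseudoMetric D :=
    .sum F fun f _ => isRightInvContPseudoMetric_rightOsc f.2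
  obtain ⟨a, ha, haE⟩ := h (δ / (2 * K)) (by positivity) E D hD
  refine ⟨a, ha, fun g hg f hf => ?_⟩
  have hfD (x y) : |f.1 x - f.1 y| ≤ 2 * K * D x y := by
    have hle : |f.1 x - f.1 y| ≤ D x y := by
      simpa using (abs_sub_le_rightOsc f.2.1 x y 1).trans <|
        Finset.single_le_sum (f := fun f : RUCb G => rightOsc f.1 x y)
          (fun f _ => (isPseudoMetric_rightOsc f.2.1).nonneg x y) hf
    exact hle.trans (le_mul_of_one_le_left (hD.nonneg x y) (by linarith))
  convert haE.abs_sub_le_of_abs_le ha (by positivity) (hfK f hf) hfD hg using 1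
  field_simp

end Amenability

lemma IsMeanOn.mono {X : Type*} {D D' : Set (X → ℝ)} {m : (X → ℝ) → ℝ} (h : IsMeanOn X D m)
    (hD : D' ⊆ D) : IsMeanOn X D' m :=
  ⟨h.1, fun f hf g hg => h.2.1 f (hD hf) g (hD hg), fun c f hf => h.2.2.1 c f (hD hf),
    fun f hf => h.2.2.2 f (hD hf)⟩

section UltraMean

variable {X J : Type*} {a : J → X →₀ ℝ} (U : Ultrafilter J)

noncomputable def ultraMean (a : J → X →₀ ℝ) (f : X → ℝ) : ℝ :=
  limUnder (U : Filter J) fun j => weightedSum (a j) f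

lemma tendsto_ultraMean (ha : ∀ j, IsProb (a j)) {f : X → ℝ} (hf : ∃ C, ∀ x, |f x| ≤ C) :
    Tendsto (fun j => weightedSum (a j) f) U (𝓝 (ultraMean U a f)) := by
  obtain ⟨C, hC⟩ := hf
  obtain ⟨L, -, hL⟩ := isCompact_Icc.ultrafilter_le_nhds (U.map fun j => weightedSum (a j) f) <|
    le_principal_iff.2 <| mem_map.2 <| univ_mem' fun j => abs_le.1 ((ha j).abs_weightedSum_le hC)
  exact tendsto_nhds_limUnder ⟨L, hL⟩

lemma isMeanOn_ultraMean (ha : ∀ j, IsProb (a j)) :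
    IsMeanOn X {f | ∃ C, ∀ x, |f x| ≤ C} (ultraMean U a) := by
  refine ⟨?_, fun f hf f' hf' => ?_, fun c f hf => ?_, fun f hf hf0 => ?_⟩
  · have h1 (j : J) : weightedSum (a j) (fun _ => 1) = 1 := (ha j).weightedSum_const 1
    simp only [ultraMean, h1]
    exact tendsto_const_nhds.limUnder_eq
  · simp only [ultraMean, weightedSum_add]
    exact ((tendsto_ultraMean U ha hf).add (tendsto_ultraMean U ha hf')).limUnder_eq
  · simp only [ultraMean, weightedSum_smul]
    exact ((tendsto_ultraMean U ha hf).const_mul c).limUnder_eq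
  · exact ge_of_tendsto' (tendsto_ultraMean U ha hf) fun j => weightedSum_nonneg (ha j).nonneg hf0

end UltraMean

lemma topAmenable_of_tendsto {G J : Type*} [Group G] [TopologicalSpace G] {l : Filter J}
    [l.NeBot] {a : J → G →₀ ℝ} (ha : ∀ j, IsProb (a j))
    (h : ∀ f ∈ RUCb G, ∀ g : G, Tendsto
      (fun j => weightedSum (a j) f - weightedSum (mapDomain (g * ·) (a j)) f) l (𝓝 0)) :
    TopAmenable G := by
  set U := Ultrafilter.of l
  refine ⟨ultraMean U a, (isMeanOn_ultraMean U ha).mono fun f hf => hf.1, fun f hf g => ?_⟩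
  obtain ⟨C, hC⟩ := hf.1
  have hdiff := (tendsto_ultraMean U ha ⟨C, hC⟩).sub
    (tendsto_ultraMean U ha (f := fun x => f (g * x)) ⟨C, fun x => hC _⟩)
  simp only [← Function.comp_def f, ← weightedSum_mapDomain] at hdiff
  exact (sub_eq_zero.1 <|
    tendsto_nhds_unique hdiff ((h f hf g).mono_left (Ultrafilter.of_le l))).symm

lemma topAmenable_of_hasAlmostInvariantMeans {G : Type*} [Group G] [TopologicalSpace G]
    [ContinuousMul G] (h : ∀ ε > 0, HasAlmostInvariantMeans G ε) : TopAmenable G := by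
  classical
  choose a ha haE using fun j : Finset G × Finset (RUCb G) × ℕ =>
    exists_isProb_forall_RUCb h j.1 j.2.1 (Nat.one_div_pos_of_nat (n := j.2.2))
  refine topAmenable_of_tendsto (l := atTop) ha fun f hf g => Metric.tendsto_nhds.2 fun δ hδ => ?_
  obtain ⟨N, hN⟩ := exists_nat_one_div_lt hδ
  filter_upwards [eventually_ge_atTop ({g}, {⟨f, hf⟩}, N)] with j ⟨hgj, hfj, hNj⟩
  rw [Real.dist_0_eq_abs]
  refine (haE j g (hgj (Finset.mem_singleton_self g)) ⟨f, hf⟩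
    (hfj (Finset.mem_singleton_self _))).trans_lt (lt_of_le_of_lt ?_ hN)
  gcongr

/-- If for some fixed `ε ∈ (0,1)` one can always find almost invariant normalized positive
finitely supported functions (tested against 1-Lipschitz functions into `[0,1]`), then the
same holds for every `ε' > 0`, and consequently `G` is amenable. -/
theorem stmt_8 (G : Type*) [Group G] [TopologicalSpace G] [IsTopologicalGroup G]
    (ε : ℝ) (hε : ε ∈ Set.Ioo (0:ℝ) 1)
    (h : ∀ E : Finset G, ∀ d : G → G → ℝ, IsPseudoMetric d →
      (∀ g x y : G, d (x * g) (y * g) = d x y) →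
      (∀ x : G, ∀ r > (0:ℝ), IsOpen {y : G | d x y < r}) →
      ∃ a : G →₀ ℝ, (∀ x, 0 ≤ a x) ∧ a.sum (fun _ c => c) = 1 ∧
        ∀ g ∈ E, ∀ f : G → ℝ, (∀ x y, |f x - f y| ≤ d x y) →
          (∀ x, f x ∈ Set.Icc (0:ℝ) 1) →
          |a.sum (fun x c => c * f x) -
            (Finsupp.mapDomain (fun x => g * x) a).sum (fun x c => c * f x)| ≤ ε) :
    (∀ ε' > (0:ℝ), ∀ E : Finset G, ∀ d : G → G → ℝ, IsPseudoMetric d →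
      (∀ g x y : G, d (x * g) (y * g) = d x y) →
      (∀ x : G, ∀ r > (0:ℝ), IsOpen {y : G | d x y < r}) →
      ∃ a : G →₀ ℝ, (∀ x, 0 ≤ a x) ∧ a.sum (fun _ c => c) = 1 ∧
        ∀ g ∈ E, ∀ f : G → ℝ, (∀ x y, |f x - f y| ≤ d x y) →
          (∀ x, f x ∈ Set.Icc (0:ℝ) 1) →
          |a.sum (fun x c => c * f x) -
            (Finsupp.mapDomain (fun x => g * x) a).sum (fun x c => c * f x)| ≤ ε') ∧
    TopAmenable G := by
  have hP : HasAlmostInvariantMeans G ε := fun E d hd => by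
    obtain ⟨a, ha0, ha1, haE⟩ :=
      h E d hd.toIsPseudoMetric hd.mul_right fun x r _ => hd.isOpen_ball x r
    exact ⟨a, ⟨ha0, ha1⟩, haE⟩
  have hall (ε' : ℝ) (hε' : 0 < ε') : HasAlmostInvariantMeans G ε' := hP.of_lt_one hε hε'
  refine ⟨fun ε' hε' E d hd hdr hdo => ?_, topAmenable_of_hasAlmostInvariantMeans hall⟩
  obtain ⟨a, ⟨ha0, ha1⟩, haE⟩ :=
    hall ε' hε' E d (IsRightInvContPseudoMetric.of_isOpen_ball hd hdr hdo)
  exact ⟨a, ha0, ha1, haE⟩
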